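/- Let q > 0, let k ∈ ℤ, and let w_0,…,w_n be positive weights. Then the rational quantum trigonometric Bernstein basis functions R^n_0(·;q),…,R^n_n(·;q) of degree n on the interval I = [kπ/2, (k+1)π/2] form a normalized totally positive system on I: (i) Σ_{j=0}^{n} R^n_j(x;q) = 1 for every x ∈ I, and (ii) for all points x_0 < x_1 < ⋯ < x_m in I, every minor of the collocation matrix (R^n_i(x_j;q)) is nonnegative. -/

import Mathlib

/-- `d(x,y;c) = ((c+1)/2)·sin(y−x) + ((c−1)/2)·sin(y+x)`. -/
noncomputable def dq (x y c : ℝ) : ℝ :=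
  (c + 1) / 2 * Real.sin (y - x) + (c - 1) / 2 * Real.sin (y + x)

/-- The q-integer `[k]_q = 1 + q + ⋯ + q^{k−1}`. -/
noncomputable def qInt (q : ℝ) (k : ℕ) : ℝ := ∑ i ∈ Finset.range k, q ^ i

/-- The q-factorial `[k]_q!`. -/
noncomputable def qFact (q : ℝ) : ℕ → ℝ
  | 0 => 1
  | k + 1 => qInt q (k + 1) * qFact q k

/-- The q-binomial coefficient `[n choose k]_q`. -/
noncomputable def qBinom (q : ℝ) (n k : ℕ) : ℝ :=
  qFact q n / (qFact q k * qFact q (n - k))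

/-- Quantum trigonometric Bernstein basis function `B^n_k(x;q)` on `[a,b]`. -/
noncomputable def qBern (q a b : ℝ) (n k : ℕ) (x : ℝ) : ℝ :=
  qBinom q n k *
    ((∏ i ∈ Finset.range k, dq a x (q ^ i)) * ∏ i ∈ Finset.range (n - k), dq x b (q ^ i)) /
    ∏ i ∈ Finset.range n, dq a b (q ^ i)

/-- A matrix is totally positive if all its minors are nonnegative. -/
def IsTotallyPositive {p r : ℕ} (M : Matrix (Fin p) (Fin r) ℝ) : Prop :=
  ∀ (k : ℕ) (f : Fin k → Fin p) (g : Fin k → Fin r),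
    StrictMono f → StrictMono g → 0 ≤ (M.submatrix f g).det

/-- A system of functions is totally positive on `I` if all its collocation matrices at
increasing points of `I` are totally positive. -/
def IsTotallyPositiveSystem (I : Set ℝ) {n : ℕ} (φ : Fin n → ℝ → ℝ) : Prop :=
  ∀ (m : ℕ) (x : Fin (m + 1) → ℝ), StrictMono x → (∀ j, x j ∈ I) →
    IsTotallyPositive (Matrix.of fun i j => φ i (x j))

/-- Number of sign changes between consecutive entries of a list. -/
noncomputable def signChanges : List ℝ → ℕ
  | [] => 0
  | [_] => 0
  | a :: b :: t => (if a * b < 0 then 1 else 0) + signChanges (b :: t)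

/-- `S⁻(v)`: the number of strict sign changes of a finite real sequence, i.e. the number
of sign changes after deleting all zero entries. -/
noncomputable def strictSignChanges (v : List ℝ) : ℕ :=
  signChanges (v.filter fun x => x ≠ 0)

/-- Rational quantum trigonometric Bernstein basis function `R^n_k(x;q)` with weights `w`. -/
noncomputable def rqBern (q a b : ℝ) (n : ℕ) (w : Fin (n + 1) → ℝ) (k : Fin (n + 1)) (x : ℝ) : ℝ :=
  w k * qBern q a b n k x / ∑ i : Fin (n + 1), w i * qBern q a b n i x


lemma fewnomial : ∀ (m : ℕ) (lam : Fin m → ℕ) (c t : Fin m → ℝ),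
    StrictMono lam → StrictMono t → (∀ j, 0 < t j) →
    (∀ j, ∑ i, c i * t j ^ lam i = 0) → ∀ i, c i = 0 := by
  intro m
  induction m with
  | zero => exact fun _ _ _ _ _ _ _ i => i.elim0
  | succ m ih =>
    intro lam c t hlam ht htpos hzero
    have hle : ∀ i, lam 0 ≤ lam i := fun i => hlam.monotone (Fin.zero_le i)
    set g : ℝ → ℝ := fun x => ∑ i, c i * x ^ (lam i - lam 0) with hg
    set g' : ℝ → ℝ :=
      fun x => ∑ i, c i * (((lam i - lam 0 : ℕ) : ℝ) * x ^ (lam i - lam 0 - 1)) with hg'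
    have hderiv : ∀ x, HasDerivAt g (g' x) x := by
      intro x
      exact HasDerivAt.fun_sum fun i _ => (hasDerivAt_pow _ x).const_mul (c i)
    have hgz : ∀ j, g (t j) = 0 := by
      intro j
      have hne : (t j) ^ (lam 0) ≠ 0 := pow_ne_zero _ (ne_of_gt (htpos j))
      have key : (t j) ^ (lam 0) * g (t j) = ∑ i, c i * t j ^ lam i := by
        rw [hg]
        simp only [Finset.mul_sum]
        refine Finset.sum_congr rfl fun i _ => ?_
        have h1 := hle i
        rw [← mul_assoc, mul_comm (t j ^ lam 0), mul_assoc, ← pow_add]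
        congr 2
        omega
      have := hzero j
      rw [← key] at this
      exact (mul_eq_zero.mp this).resolve_left hne
    have hroll : ∀ j : Fin m, ∃ z, z ∈ Set.Ioo (t j.castSucc) (t j.succ) ∧ g' z = 0 := by
      intro j
      have hlt : t j.castSucc < t j.succ := ht Fin.castSucc_lt_succ
      obtain ⟨z, hz, hz0⟩ := exists_hasDerivAt_eq_zero hlt
        (fun x _ => (hderiv x).continuousAt.continuousWithinAt)
        (by rw [hgz, hgz]) (fun x _ => hderiv x)
      exact ⟨z, hz, hz0⟩
    set s : Fin m → ℝ := fun j => (hroll j).choose with hs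
    have hsmem : ∀ j, s j ∈ Set.Ioo (t j.castSucc) (t j.succ) := fun j => (hroll j).choose_spec.1
    have hs0 : ∀ j, g' (s j) = 0 := fun j => (hroll j).choose_spec.2
    have hsmono : StrictMono s := by
      intro j j' hjj
      calc s j < t j.succ := (hsmem j).2
        _ ≤ t j'.castSucc := ht.monotone (by
            rw [Fin.le_def]
            simp only [Fin.val_succ, Fin.coe_castSucc]
            exact hjj)
        _ < s j' := (hsmem j').1
    have hspos : ∀ j, 0 < s j := fun j => lt_trans (htpos j.castSucc) (hsmem j).1
    have hcz : ∀ i : Fin m, c i.succ * ((lam i.succ - lam 0 : ℕ) : ℝ) = 0 := by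
      refine ih (fun i => lam i.succ - lam 0 - 1)
        (fun i => c i.succ * ((lam i.succ - lam 0 : ℕ) : ℝ)) s ?_ hsmono hspos ?_
      · intro i i' hii
        have h1 : lam i.succ < lam i'.succ := hlam (Fin.succ_lt_succ_iff.mpr hii)
        have h3 : lam 0 < lam i.succ := hlam (Fin.succ_pos i)
        show lam i.succ - lam 0 - 1 < lam i'.succ - lam 0 - 1
        omega
      · intro j
        have h := hs0 j
        simp only [hg', Fin.sum_univ_succ, Nat.sub_self, Nat.cast_zero, zero_mul, mul_zero,
          zero_add] at h
        have heq : (∑ i : Fin m,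
            (fun i => c i.succ * ((lam i.succ - lam 0 : ℕ) : ℝ)) i *
              s j ^ (fun i => lam i.succ - lam 0 - 1) i)
            = ∑ i : Fin m, c i.succ * (((lam i.succ - lam 0 : ℕ) : ℝ) *
                s j ^ (lam i.succ - lam 0 - 1)) :=
          Finset.sum_congr rfl fun i _ => by ring
        rw [heq]
        exact h
    have hcsucc : ∀ i : Fin m, c i.succ = 0 := by
      intro i
      have h3 : lam 0 < lam i.succ := hlam (Fin.succ_pos i)
      have hne : ((lam i.succ - lam 0 : ℕ) : ℝ) ≠ 0 := by
        rw [Nat.cast_ne_zero]; omega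
      exact (mul_eq_zero.mp (hcz i)).resolve_right hne
    have h00 : c 0 = 0 := by
      have h := hzero 0
      rw [Fin.sum_univ_succ] at h
      simp only [hcsucc, zero_mul, Finset.sum_const_zero, add_zero] at h
      exact (mul_eq_zero.mp h).resolve_right (pow_ne_zero _ (ne_of_gt (htpos 0)))
    intro i
    rcases Fin.eq_zero_or_eq_succ i with h | ⟨j, rfl⟩
    · rw [h]; exact h00
    · exact hcsucc j

lemma vandermonde_pos : ∀ (N : ℕ) (lam : Fin N → ℕ) (t : Fin N → ℝ),
    StrictMono lam → StrictMono t → (∀ c, 0 < t c) →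
    0 < (Matrix.of fun r c : Fin N => t c ^ lam r).det := by
  intro N
  induction N with
  | zero => intro lam t _ _ _; simp [Matrix.det_fin_zero]
  | succ M ih =>
    intro lam t hlam ht htpos
    set d : Fin (M+1) → ℝ := fun i =>
      (-1 : ℝ) ^ ((i : ℕ) + M) *
        (Matrix.of fun r c : Fin M => t c.castSucc ^ lam (i.succAbove r)).det with hd
    set F : ℝ → ℝ := fun u => ∑ i, d i * u ^ lam i with hF
    have hFdet : ∀ u : ℝ,
        (Matrix.of fun r c : Fin (M+1) => (if c = Fin.last M then u else t c) ^ lam r).det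
          = F u := by
      intro u
      rw [Matrix.det_succ_column _ (Fin.last M)]
      refine Finset.sum_congr rfl fun i _ => ?_
      rw [Fin.succAbove_last]
      have h2 : (Matrix.of fun r c : Fin (M+1) =>
            (if c = Fin.last M then u else t c) ^ lam r).submatrix i.succAbove Fin.castSucc
          = Matrix.of fun r c : Fin M => t c.castSucc ^ lam (i.succAbove r) := by
        ext r c
        simp [(Fin.castSucc_lt_last c).ne]
      rw [h2]
      simp only [hd, Matrix.of_apply, if_pos rfl, if_true, Fin.val_last]
      ring
    have hF0 : ∀ c : Fin M, F (t c.castSucc) = 0 := by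
      intro c
      rw [← hFdet]
      apply Matrix.det_zero_of_column_eq (Fin.castSucc_lt_last c).ne
      intro r
      simp [(Fin.castSucc_lt_last c).ne]
    have hdlast : 0 < d (Fin.last M) := by
      rw [hd]
      simp only [Fin.val_last, Fin.succAbove_last]
      rw [show ((-1:ℝ))^(M+M) = 1 from Even.neg_one_pow ⟨M, rfl⟩, one_mul]
      exact ih (fun r => lam r.castSucc) (fun c => t c.castSucc)
        (fun a b hab => hlam (Fin.castSucc_lt_castSucc_iff.mpr hab))
        (fun a b hab => ht (Fin.castSucc_lt_castSucc_iff.mpr hab))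
        (fun c => htpos _)
    have hgoal : (Matrix.of fun r c : Fin (M+1) => t c ^ lam r).det = F (t (Fin.last M)) := by
      rw [← hFdet]
      congr 1
      ext r c
      by_cases hc : c = Fin.last M <;> simp [hc]
    rw [hgoal]
    by_contra hle0
    push_neg at hle0
    have hSgood : ∀ S : ℝ, 1 ≤ S → (∑ i, |d i|) < d (Fin.last M) * S → 0 < F S := by
      intro S hS1 hSbig
      have hSpos : (0:ℝ) < S := lt_of_lt_of_le one_pos hS1
      rcases Nat.eq_zero_or_pos M with hM | hM
      · subst hM
        simp only [hF]
        exact lt_of_lt_of_eq (mul_pos hdlast (pow_pos hSpos (lam 0)))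
          (Fin.sum_univ_one fun i => d i * S ^ lam i).symm
      · have hexp : ∀ i : Fin M, lam i.castSucc ≤ lam (Fin.last M) - 1 := by
          intro i
          have := hlam (Fin.castSucc_lt_last i)
          omega
        have hlam1 : 1 ≤ lam (Fin.last M) := by
          have h0 : (⟨0, by omega⟩ : Fin M).castSucc < Fin.last M := Fin.castSucc_lt_last _
          have := hlam h0
          omega
        have hpow : S * S ^ (lam (Fin.last M) - 1) = S ^ lam (Fin.last M) := by
          rw [← pow_succ']
          congr 1
          omega
        simp only [hF]
        rw [Fin.sum_univ_castSucc]
        have hsum : ∑ i : Fin M, -(|d i.castSucc| * S ^ (lam (Fin.last M) - 1))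
            ≤ ∑ i : Fin M, d i.castSucc * S ^ lam i.castSucc := by
          apply Finset.sum_le_sum
          intro i _
          have h1 : S ^ lam i.castSucc ≤ S ^ (lam (Fin.last M) - 1) :=
            pow_le_pow_right₀ hS1 (hexp i)
          calc -(|d i.castSucc| * S ^ (lam (Fin.last M) - 1))
              ≤ -(|d i.castSucc| * S ^ lam i.castSucc) := by
                apply neg_le_neg
                exact mul_le_mul_of_nonneg_left h1 (abs_nonneg _)
            _ ≤ d i.castSucc * S ^ lam i.castSucc := by
                rw [← neg_mul]
                exact mul_le_mul_of_nonneg_right (neg_abs_le _) (le_of_lt (pow_pos hSpos _))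
        rw [Finset.sum_neg_distrib, ← Finset.sum_mul] at hsum
        have hsub : ∑ i : Fin M, |d i.castSucc| ≤ ∑ i, |d i| := by
          rw [Fin.sum_univ_castSucc]
          exact le_add_of_nonneg_right (abs_nonneg _)
        have hP : (0:ℝ) < S ^ (lam (Fin.last M) - 1) := pow_pos hSpos _
        have hlastterm : d (Fin.last M) * S ^ lam (Fin.last M)
            = d (Fin.last M) * S * S ^ (lam (Fin.last M) - 1) := by
          rw [← hpow]; ring
        rw [hlastterm]
        nlinarith [mul_lt_mul_of_pos_right (lt_of_le_of_lt hsub hSbig) hP]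
    set Sv : ℝ := max (t (Fin.last M) + 1) (((∑ i, |d i|) + 1) / d (Fin.last M)) with hSv
    have hS1 : 1 ≤ Sv := by
      have h1 : (1:ℝ) ≤ t (Fin.last M) + 1 := by nlinarith [htpos (Fin.last M)]
      exact le_trans h1 (le_max_left _ _)
    have hSbig : (∑ i, |d i|) < d (Fin.last M) * Sv := by
      have h2 : ((∑ i, |d i|) + 1) / d (Fin.last M) ≤ Sv := le_max_right _ _
      rw [div_le_iff₀ hdlast] at h2
      nlinarith
    have hFS := hSgood Sv hS1 hSbig
    have hlt : t (Fin.last M) < Sv := lt_of_lt_of_le (lt_add_one _) (le_max_left _ _)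
    have hcont : Continuous F := by
      rw [hF]
      exact continuous_finset_sum _ fun i _ => continuous_const.mul (continuous_pow (lam i))
    obtain ⟨z, hz, hFz⟩ : ∃ z ∈ Set.Ioo (t (Fin.last M)) Sv, F z = 0 := by
      rcases lt_or_eq_of_le hle0 with hlt0 | heq0
      · have h0mem : (0:ℝ) ∈ Set.Ioo (F (t (Fin.last M))) (F Sv) := ⟨hlt0, hFS⟩
        obtain ⟨z, hz, hz0⟩ :=
          intermediate_value_Ioo (le_of_lt hlt) hcont.continuousOn h0mem
        exact ⟨z, hz, hz0⟩
      · -- F (t last) = 0 : apply fewnomial directly to the points t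
        exfalso
        simp only [hF] at heq0 hF0
        have hall : ∀ j : Fin (M+1), ∑ i, d i * t j ^ lam i = 0 := by
          intro j
          by_cases hj : j = Fin.last M
          · rw [hj]; exact heq0
          · obtain ⟨c, rfl⟩ := Fin.exists_castSucc_eq.mpr hj
            exact hF0 c
        have := fewnomial (M+1) lam d t hlam ht htpos hall (Fin.last M)
        exact absurd this (ne_of_gt hdlast)
    set p : Fin (M+1) → ℝ := fun j => if j = Fin.last M then z else t j with hp
    have hpmono : StrictMono p := by
      intro a b hab
      by_cases hb : b = Fin.last M
      · have ha : a ≠ Fin.last M := by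
          intro h; rw [h, hb] at hab; exact lt_irrefl _ hab
        rw [hp]
        simp only [if_neg ha, if_pos hb]
        calc t a ≤ t (Fin.last M) := ht.monotone (Fin.le_last a)
          _ < z := hz.1
      · have ha : a ≠ Fin.last M := by
          intro h
          rw [h] at hab
          exact absurd (lt_of_le_of_lt (Fin.le_last b) hab) (lt_irrefl _)
        rw [hp]
        simp only [if_neg ha, if_neg hb]
        exact ht hab
    have hppos : ∀ j, 0 < p j := by
      intro j
      rw [hp]
      by_cases hj : j = Fin.last M
      · simp only [if_pos hj]
        exact lt_trans (htpos (Fin.last M)) hz.1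
      · simp only [if_neg hj]
        exact htpos j
    simp only [hF] at hFz hF0
    have hall : ∀ j : Fin (M+1), ∑ i, d i * p j ^ lam i = 0 := by
      intro j
      by_cases hj : j = Fin.last M
      · rw [hp]
        simp only [if_pos hj]
        exact hFz
      · rw [hp]
        simp only [if_neg hj]
        obtain ⟨c, rfl⟩ := Fin.exists_castSucc_eq.mpr hj
        exact hF0 c
    have := fewnomial (M+1) lam d p hlam hpmono hppos hall (Fin.last M)
    exact absurd this (ne_of_gt hdlast)

lemma vandermonde_nonneg (N : ℕ) (lam : Fin N → ℕ) (t : Fin N → ℝ)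
    (hlam : StrictMono lam) (ht : StrictMono t) (htnn : ∀ c, 0 ≤ t c) :
    0 ≤ (Matrix.of fun r c : Fin N => t c ^ lam r).det := by
  cases N with
  | zero => simp [Matrix.det_fin_zero]
  | succ M =>
    by_cases h0 : 0 < t 0
    · exact le_of_lt (vandermonde_pos _ lam t hlam ht
        (fun c => lt_of_lt_of_le h0 (ht.monotone (Fin.zero_le c))))
    · have ht0 : t 0 = 0 := le_antisymm (not_lt.mp h0) (htnn 0)
      have htpos : ∀ c : Fin M, 0 < t c.succ := by
        intro c
        rw [← ht0]
        exact ht (Fin.succ_pos c)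
      by_cases hl0 : lam 0 = 0
      · rw [Matrix.det_succ_column_zero, Fin.sum_univ_succ]
        have hz : ∀ i : Fin M,
            (-1:ℝ) ^ ((i.succ : ℕ)) * (Matrix.of fun r c : Fin (M+1) => t c ^ lam r) i.succ 0 *
              (((Matrix.of fun r c : Fin (M+1) => t c ^ lam r)).submatrix
                i.succ.succAbove Fin.succ).det = 0 := by
          intro i
          have : lam i.succ ≠ 0 := by
            have := hlam (Fin.succ_pos i)
            omega
          simp [ht0, zero_pow this]
        rw [Finset.sum_congr rfl fun i _ => hz i]
        simp only [Finset.sum_const_zero, add_zero, Fin.val_zero, pow_zero, one_mul,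
          Matrix.of_apply, ht0, hl0, Fin.succAbove_zero]
        have hsub : ((Matrix.of fun r c : Fin (M+1) => t c ^ lam r).submatrix
            Fin.succ Fin.succ) = Matrix.of fun r c : Fin M => t c.succ ^ lam r.succ := by
          ext r c
          simp
        rw [hsub]
        have := vandermonde_pos M (fun r => lam r.succ) (fun c => t c.succ)
          (fun a b hab => hlam (Fin.succ_lt_succ_iff.mpr hab))
          (fun a b hab => ht (Fin.succ_lt_succ_iff.mpr hab)) htpos
        positivity
      · apply le_of_eq
        symm
        apply Matrix.det_eq_zero_of_column_eq_zero 0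
        intro i
        simp only [Matrix.of_apply, ht0]
        exact zero_pow (by
          have := hlam.monotone (Fin.zero_le i)
          omega)

/-- All-v-positive case. -/
lemma uv_det_nonneg_pos (n N : ℕ) (lam : Fin N → ℕ) (u v : Fin N → ℝ)
    (hlam : StrictMono lam) (hn : ∀ r, lam r ≤ n)
    (hu : ∀ c, 0 ≤ u c) (hv : ∀ c, 0 < v c)
    (hcross : ∀ c c', c < c' → u c * v c' < u c' * v c) :
    0 ≤ (Matrix.of fun r c : Fin N => u c ^ lam r * v c ^ (n - lam r)).det := by
  set t : Fin N → ℝ := fun c => u c / v c with hts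
  have htnn : ∀ c, 0 ≤ t c := fun c => div_nonneg (hu c) (le_of_lt (hv c))
  have htmono : StrictMono t := by
    intro c c' hcc
    rw [hts]
    simp only
    rw [div_lt_div_iff₀ (hv c) (hv c')]
    have := hcross c c' hcc
    nlinarith [hv c, hv c']
  have hmat : (Matrix.of fun r c : Fin N => u c ^ lam r * v c ^ (n - lam r))
      = Matrix.of fun r c : Fin N => (v c ^ n) * ((Matrix.of fun r c : Fin N => t c ^ lam r) r c) := by
    ext r c
    simp only [Matrix.of_apply, hts, div_pow]
    have hvne : (v c : ℝ) ^ lam r ≠ 0 := pow_ne_zero _ (ne_of_gt (hv c))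
    have h1 : v c ^ n = v c ^ (n - lam r) * v c ^ lam r := by
      rw [← pow_add]
      congr 1
      have := hn r
      omega
    rw [h1]
    field_simp
  rw [hmat, Matrix.det_mul_row]
  apply mul_nonneg
  · exact Finset.prod_nonneg fun c _ => pow_nonneg (le_of_lt (hv c)) n
  · exact vandermonde_nonneg N lam t hlam htmono htnn

lemma uv_det_nonneg (n N : ℕ) (lam : Fin N → ℕ) (u v : Fin N → ℝ)
    (hlam : StrictMono lam) (hn : ∀ r, lam r ≤ n)
    (hu : ∀ c, 0 ≤ u c) (hv : ∀ c, 0 ≤ v c)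
    (hcross : ∀ c c', c < c' → u c * v c' < u c' * v c) :
    0 ≤ (Matrix.of fun r c : Fin N => u c ^ lam r * v c ^ (n - lam r)).det := by
  cases N with
  | zero => simp [Matrix.det_fin_zero]
  | succ M =>
    by_cases hvlast : v (Fin.last M) = 0
    · -- v positive at all other columns
      have hvpos : ∀ c : Fin (M+1), c ≠ Fin.last M → 0 < v c := by
        intro c hc
        rcases (hv c).lt_or_eq with h | h
        · exact h
        · exfalso
          have hclt : c < Fin.last M := Fin.lt_last_iff_ne_last.mpr hc
          have := hcross c (Fin.last M) hclt
          rw [hvlast, ← h] at this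
          simp at this
      by_cases hllast : lam (Fin.last M) = n
      · -- expand along the last column
        rw [Matrix.det_succ_column _ (Fin.last M)]
        apply Finset.sum_nonneg
        intro i _
        by_cases hi : i = Fin.last M
        · subst hi
          rw [Fin.succAbove_last]
          have hent : (Matrix.of fun r c : Fin (M+1) =>
              u c ^ lam r * v c ^ (n - lam r)) (Fin.last M) (Fin.last M)
              = u (Fin.last M) ^ n := by
            simp [hvlast, hllast]
          rw [hent]
          have hsign : ((-1:ℝ)) ^ ((Fin.last M : ℕ) + (Fin.last M : ℕ)) = 1 :=
            Even.neg_one_pow ⟨M, by simp [Fin.val_last]⟩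
          rw [hsign, one_mul]
          apply mul_nonneg (pow_nonneg (hu _) _)
          have hsub : ((Matrix.of fun r c : Fin (M+1) =>
              u c ^ lam r * v c ^ (n - lam r)).submatrix Fin.castSucc Fin.castSucc)
              = Matrix.of fun r c : Fin M =>
                  u c.castSucc ^ lam r.castSucc * v c.castSucc ^ (n - lam r.castSucc) := by
            ext r c; simp
          rw [hsub]
          exact uv_det_nonneg_pos n M (fun r => lam r.castSucc)
            (fun c => u c.castSucc) (fun c => v c.castSucc)
            (fun a b hab => hlam (Fin.castSucc_lt_castSucc_iff.mpr hab))
            (fun r => hn _) (fun c => hu _)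
            (fun c => hvpos c.castSucc (Fin.castSucc_lt_last c).ne)
            (fun c c' hcc => hcross _ _ (Fin.castSucc_lt_castSucc_iff.mpr hcc))
        · -- entry is zero
          have hent : (Matrix.of fun r c : Fin (M+1) =>
              u c ^ lam r * v c ^ (n - lam r)) i (Fin.last M) = 0 := by
            have hlt : lam i < n := by
              have h1 : lam i ≤ lam (Fin.last M) := hlam.monotone (Fin.le_last i)
              have h2 : lam (Fin.last M) ≤ n := hn _
              rcases (Fin.le_last i).lt_or_eq with h | h
              · have := hlam h
                omega
              · rw [h]
                omega
            simp [hvlast, zero_pow (show n - lam i ≠ 0 by omega)]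
          rw [hent]
          simp
      · -- lam last < n : the whole last column is zero
        apply le_of_eq
        symm
        apply Matrix.det_eq_zero_of_column_eq_zero (Fin.last M)
        intro i
        have hlt : lam i < n := by
          have h1 : lam i ≤ lam (Fin.last M) := hlam.monotone (Fin.le_last i)
          have h2 : lam (Fin.last M) ≤ n := hn _
          omega
        simp [hvlast, zero_pow (show n - lam i ≠ 0 by omega)]
    · -- all v positive
      have hvpos : ∀ c : Fin (M+1), 0 < v c := by
        intro c
        rcases (hv c).lt_or_eq with h | h
        · exact h
        · by_cases hc : c = Fin.last M
          · exfalso; rw [hc] at h; exact hvlast h.symm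
          · exfalso
            have hclt : c < Fin.last M := Fin.lt_last_iff_ne_last.mpr hc
            have := hcross c (Fin.last M) hclt
            rw [← h] at this
            nlinarith [hu c, hu (Fin.last M), (hv (Fin.last M))]
      exact uv_det_nonneg_pos n (M+1) lam u v hlam hn hu hvpos hcross

lemma qInt_pos {q : ℝ} (hq : 0 < q) (m : ℕ) : 0 < qInt q (m + 1) := by
  unfold qInt
  apply Finset.sum_pos
  · intro i _
    exact pow_pos hq i
  · exact ⟨0, Finset.mem_range.mpr (Nat.succ_pos m)⟩

lemma qFact_pos {q : ℝ} (hq : 0 < q) : ∀ m, 0 < qFact q m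
  | 0 => one_pos
  | (m + 1) => by
      rw [qFact]
      exact mul_pos (qInt_pos hq m) (qFact_pos hq m)

lemma qBinom_pos {q : ℝ} (hq : 0 < q) (n j : ℕ) : 0 < qBinom q n j :=
  div_pos (qFact_pos hq n) (mul_pos (qFact_pos hq j) (qFact_pos hq _))

lemma dq_left (k : ℤ) (c x : ℝ) :
    dq ((k : ℝ) * Real.pi / 2) x c
      = (if Even k then c else 1) * Real.sin (x - (k : ℝ) * Real.pi / 2) := by
  rcases Int.even_or_odd k with hk | hk
  · have hk2 := hk
    obtain ⟨m, hm⟩ := hk2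
    have hsin : Real.sin ((k : ℝ) * Real.pi / 2) = 0 := by
      have h : (k : ℝ) * Real.pi / 2 = (m : ℝ) * Real.pi := by
        rw [hm]; push_cast; ring
      rw [h, Real.sin_int_mul_pi]
    rw [if_pos hk]
    unfold dq
    rw [Real.sin_sub, Real.sin_add, hsin]
    ring
  · obtain ⟨m, hm⟩ := hk
    have hcos : Real.cos ((k : ℝ) * Real.pi / 2) = 0 := by
      have h : (k : ℝ) * Real.pi / 2 = (m : ℝ) * Real.pi + Real.pi / 2 := by
        rw [hm]; push_cast; ring
      rw [h, Real.cos_add_pi_div_two, Real.sin_int_mul_pi, neg_zero]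
    rw [if_neg (Int.not_even_iff_odd.mpr ⟨m, hm⟩)]
    unfold dq
    rw [Real.sin_sub, Real.sin_add, hcos]
    ring

lemma dq_right (k : ℤ) (c x : ℝ) :
    dq x ((k : ℝ) * Real.pi / 2 + Real.pi / 2) c
      = (if Even k then c else 1) * Real.cos (x - (k : ℝ) * Real.pi / 2) := by
  have hsb : Real.sin ((k : ℝ) * Real.pi / 2 + Real.pi / 2) = Real.cos ((k : ℝ) * Real.pi / 2) :=
    Real.sin_add_pi_div_two _
  have hcb : Real.cos ((k : ℝ) * Real.pi / 2 + Real.pi / 2) = -Real.sin ((k : ℝ) * Real.pi / 2) :=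
    Real.cos_add_pi_div_two _
  rcases Int.even_or_odd k with hk | hk
  · have hk2 := hk
    obtain ⟨m, hm⟩ := hk2
    have hsin : Real.sin ((k : ℝ) * Real.pi / 2) = 0 := by
      have h : (k : ℝ) * Real.pi / 2 = (m : ℝ) * Real.pi := by
        rw [hm]; push_cast; ring
      rw [h, Real.sin_int_mul_pi]
    rw [if_pos hk]
    unfold dq
    rw [Real.sin_sub ((k : ℝ) * Real.pi / 2 + Real.pi / 2) x,
      Real.sin_add ((k : ℝ) * Real.pi / 2 + Real.pi / 2) x,
      Real.cos_sub x ((k : ℝ) * Real.pi / 2), hsb, hcb, hsin]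
    ring
  · obtain ⟨m, hm⟩ := hk
    have hcos : Real.cos ((k : ℝ) * Real.pi / 2) = 0 := by
      have h : (k : ℝ) * Real.pi / 2 = (m : ℝ) * Real.pi + Real.pi / 2 := by
        rw [hm]; push_cast; ring
      rw [h, Real.cos_add_pi_div_two, Real.sin_int_mul_pi, neg_zero]
    rw [if_neg (Int.not_even_iff_odd.mpr ⟨m, hm⟩)]
    unfold dq
    rw [Real.sin_sub ((k : ℝ) * Real.pi / 2 + Real.pi / 2) x,
      Real.sin_add ((k : ℝ) * Real.pi / 2 + Real.pi / 2) x,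
      Real.cos_sub x ((k : ℝ) * Real.pi / 2), hsb, hcb, hcos]
    ring

lemma qBern_eq (q : ℝ) (k : ℤ) (n j : ℕ) (hj : j ≤ n) (x : ℝ) :
    qBern q ((k : ℝ) * Real.pi / 2) (((k : ℝ) + 1) * Real.pi / 2) n j x
      = (qBinom q n j *
          ((∏ i ∈ Finset.range j, (if Even k then q ^ i else 1)) *
            (∏ i ∈ Finset.range (n - j), (if Even k then q ^ i else 1)) /
            (∏ i ∈ Finset.range n, (if Even k then q ^ i else 1)))) *
        (Real.sin (x - (k : ℝ) * Real.pi / 2) ^ j *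
          Real.cos (x - (k : ℝ) * Real.pi / 2) ^ (n - j)) := by
  have hb : ((k : ℝ) + 1) * Real.pi / 2 = (k : ℝ) * Real.pi / 2 + Real.pi / 2 := by ring
  unfold qBern
  rw [hb]
  have h3 : ∀ i : ℕ, dq ((k : ℝ) * Real.pi / 2) ((k : ℝ) * Real.pi / 2 + Real.pi / 2) (q ^ i)
      = (if Even k then q ^ i else 1) := by
    intro i
    rw [dq_right k _ _]
    simp
  simp only [dq_left k, dq_right k, h3]
  have h4 : Real.sin ((k : ℝ) * Real.pi / 2 + Real.pi / 2 - (k : ℝ) * Real.pi / 2) = 1 := by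
    rw [show (k : ℝ) * Real.pi / 2 + Real.pi / 2 - (k : ℝ) * Real.pi / 2 = Real.pi / 2 by ring,
      Real.sin_pi_div_two]
  simp only [h4, mul_one]
  rw [Finset.prod_mul_distrib, Finset.prod_mul_distrib, Finset.prod_const, Finset.prod_const]
  simp only [Finset.card_range]
  ring

/-- Theorem 3: for `q > 0` and positive weights, the rational quantum trigonometric
Bernstein basis is normalized totally positive on `[kπ/2, (k+1)π/2]`. -/
theorem rqBern_normalized_totallyPositive (n : ℕ) (q : ℝ) (hq : 0 < q) (k : ℤ)
    (w : Fin (n + 1) → ℝ) (hw : ∀ i, 0 < w i) :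
    (∀ x ∈ Set.Icc ((k : ℝ) * Real.pi / 2) (((k : ℝ) + 1) * Real.pi / 2),
      ∑ j : Fin (n + 1),
        rqBern q ((k : ℝ) * Real.pi / 2) (((k : ℝ) + 1) * Real.pi / 2) n w j x = 1) ∧
    IsTotallyPositiveSystem
      (Set.Icc ((k : ℝ) * Real.pi / 2) (((k : ℝ) + 1) * Real.pi / 2))
      (fun j : Fin (n + 1) => fun x =>
        rqBern q ((k : ℝ) * Real.pi / 2) (((k : ℝ) + 1) * Real.pi / 2) n w j x) := by
  have hb : ((k : ℝ) + 1) * Real.pi / 2 = (k : ℝ) * Real.pi / 2 + Real.pi / 2 := by ring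
  set a : ℝ := (k : ℝ) * Real.pi / 2 with ha
  set b : ℝ := ((k : ℝ) + 1) * Real.pi / 2 with hbb
  set E : ℕ → ℝ := fun i => if Even k then q ^ i else 1 with hE
  set Cst : ℕ → ℝ := fun j => qBinom q n j *
      ((∏ i ∈ Finset.range j, E i) * (∏ i ∈ Finset.range (n - j), E i) /
        (∏ i ∈ Finset.range n, E i)) with hCst
  have hEpos : ∀ i, 0 < E i := by
    intro i
    rw [hE]
    by_cases h : Even k
    · simp only [if_pos h]
      exact pow_pos hq i
    · simp only [if_neg h]
      exact one_pos
  have hPpos : ∀ m : ℕ, 0 < ∏ i ∈ Finset.range m, E i :=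
    fun m => Finset.prod_pos fun i _ => hEpos i
  have hCpos : ∀ j : ℕ, 0 < Cst j := by
    intro j
    rw [hCst]
    exact mul_pos (qBinom_pos hq n j)
      (div_pos (mul_pos (hPpos j) (hPpos (n - j))) (hPpos n))
  have hqb : ∀ (j : Fin (n + 1)) (x : ℝ), qBern q a b n (j : ℕ) x
      = Cst (j : ℕ) * (Real.sin (x - a) ^ (j : ℕ) * Real.cos (x - a) ^ (n - (j : ℕ))) := by
    intro j x
    rw [hCst, hE, ha, hbb]
    exact qBern_eq q k n j (Fin.is_le j) x
  have hxy : ∀ x ∈ Set.Icc a b, 0 ≤ x - a ∧ x - a ≤ Real.pi / 2 := by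
    intro x hx
    have h1 := hx.1
    have h2 := hx.2
    rw [hb] at h2
    constructor <;> linarith
  have hs_nn : ∀ x ∈ Set.Icc a b, 0 ≤ Real.sin (x - a) := by
    intro x hx
    obtain ⟨h1, h2⟩ := hxy x hx
    exact Real.sin_nonneg_of_nonneg_of_le_pi h1 (by linarith [Real.pi_pos])
  have hc_nn : ∀ x ∈ Set.Icc a b, 0 ≤ Real.cos (x - a) := by
    intro x hx
    obtain ⟨h1, h2⟩ := hxy x hx
    exact Real.cos_nonneg_of_mem_Icc ⟨by linarith [Real.pi_pos], h2⟩
  have hD_pos : ∀ x ∈ Set.Icc a b,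
      0 < ∑ i : Fin (n + 1), w i * qBern q a b n (i : ℕ) x := by
    intro x hx
    have hterm : ∀ i : Fin (n + 1), i ∈ Finset.univ →
        0 ≤ w i * qBern q a b n (i : ℕ) x := by
      intro i _
      rw [hqb]
      exact mul_nonneg (le_of_lt (hw i)) (mul_nonneg (le_of_lt (hCpos _))
        (mul_nonneg (pow_nonneg (hs_nn x hx) _) (pow_nonneg (hc_nn x hx) _)))
    rcases (hc_nn x hx).lt_or_eq with hc | hc
    · apply Finset.sum_pos' hterm
      refine ⟨0, Finset.mem_univ _, ?_⟩
      rw [hqb]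
      have h0 : ((0 : Fin (n + 1)) : ℕ) = 0 := rfl
      rw [h0, pow_zero, one_mul, Nat.sub_zero]
      exact mul_pos (hw 0) (mul_pos (hCpos 0) (pow_pos hc n))
    · have hs1 : Real.sin (x - a) = 1 := by
        have hpy := Real.sin_sq_add_cos_sq (x - a)
        rw [← hc] at hpy
        have hs0 := hs_nn x hx
        nlinarith
      apply Finset.sum_pos' hterm
      refine ⟨Fin.last n, Finset.mem_univ _, ?_⟩
      rw [hqb]
      have hlast : ((Fin.last n : Fin (n + 1)) : ℕ) = n := rfl
      rw [hlast, hs1, one_pow, Nat.sub_self, pow_zero, mul_one, mul_one]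
      exact mul_pos (hw _) (hCpos n)
  constructor
  · intro x hx
    simp only [rqBern]
    rw [← Finset.sum_div]
    exact div_self (ne_of_gt (hD_pos x hx))
  · intro m xs hxs hmemI kk f g hf hg
    have hDj : ∀ c : Fin kk,
        0 < ∑ i : Fin (n + 1), w i * qBern q a b n (i : ℕ) (xs (g c)) :=
      fun c => hD_pos _ (hmemI _)
    have hmat : (((Matrix.of fun (i : Fin (n + 1)) (j : Fin (m + 1)) =>
          rqBern q a b n w i (xs j))).submatrix f g)
        = Matrix.of fun r c : Fin kk => (w (f r) * Cst ((f r : ℕ))) *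
            ((Matrix.of fun (r c : Fin kk) =>
              (∑ i : Fin (n + 1), w i * qBern q a b n (i : ℕ) (xs (g c)))⁻¹ *
                ((Matrix.of fun (r c : Fin kk) =>
                  Real.sin (xs (g c) - a) ^ ((f r : ℕ)) *
                    Real.cos (xs (g c) - a) ^ (n - (f r : ℕ))) r c)) r c) := by
      ext r c
      simp only [Matrix.submatrix_apply, Matrix.of_apply, rqBern, hqb]
      ring
    rw [hmat, Matrix.det_mul_column, Matrix.det_mul_row]
    apply mul_nonneg
    · exact Finset.prod_nonneg fun r _ => le_of_lt (mul_pos (hw _) (hCpos _))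
    apply mul_nonneg
    · exact Finset.prod_nonneg fun c _ => inv_nonneg.mpr (le_of_lt (hDj c))
    apply uv_det_nonneg n kk (fun r => ((f r : ℕ)))
      (fun c => Real.sin (xs (g c) - a)) (fun c => Real.cos (xs (g c) - a))
      (fun r r' hrr => hf hrr) (fun r => Fin.is_le _)
      (fun c => hs_nn _ (hmemI _)) (fun c => hc_nn _ (hmemI _))
    intro c c' hcc
    have hlt : xs (g c) < xs (g c') := hxs (hg hcc)
    obtain ⟨h1, h2⟩ := hxy _ (hmemI (g c))
    obtain ⟨h1', h2'⟩ := hxy _ (hmemI (g c'))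
    have hpos : 0 < Real.sin ((xs (g c') - a) - (xs (g c) - a)) :=
      Real.sin_pos_of_pos_of_lt_pi (by linarith) (by linarith [Real.pi_pos])
    rw [Real.sin_sub] at hpos
    nlinarith [hpos]
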